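/- arXiv:2603.18039 — 2 statements merged into one kernel-verified Lean document; each statement's English description precedes it below -/
import Mathlib

section
/- Let L ≥ 1 layers of surrogate forward LIF dynamics be given: for each ℓ = 1, …, L, a linear map A^{(ℓ)} with ‖A^{(ℓ)}‖₂ ≤ M_A, bias b^{(ℓ)}, threshold θ^{(ℓ)} with ‖θ^{(ℓ)}‖_∞ ≤ M_θ, leak α ∈ (0,1), and a B₁-Lipschitz differentiable surrogate σ : ℝ → ℝ, with γ := α + M_θ B₁ < 1. For an input sequence x_{1:T}, set z_t^{(0)} := x_t and, for each layer ℓ, u_0^{(ℓ)} = 0, u_t^{(ℓ)} = α u_{t-1}^{(ℓ)} + A^{(ℓ)} z_t^{(ℓ-1)} + b^{(ℓ)} - diag(θ^{(ℓ)})·σ(u_{t-1}^{(ℓ)} - θ^{(ℓ)}), z_t^{(ℓ)} = σ(u_t^{(ℓ)} - θ^{(ℓ)}). Define the readout f(x_{1:T}) = W_out · ((1/T) ∑_{t=1}^T z_t^{(L)}) + b_out with ‖W_out‖₂ ≤ M_out. Then for any two input sequences, ‖f(x_{1:T}) - f(x′_{1:T})‖₂ ≤ L_x · (∑_{t=1}^T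 ‖x_t - x′_t‖₂²)^{1/2}, where L_x := M_out · (B₁ M_A S_T(γ))^L / √T and S_T(γ) := ∑_{k=0}^{T-1} γ^k. -/
/-!
Compare the two runs layer by layer. The leak-and-reset map `v ↦ α v - θ ⊙ σ (v - θ)` acts
coordinatewise and is `γ`-Lipschitz in each coordinate, so the membrane gap obeys
`‖Δu_t‖ ≤ γ ‖Δu_{t-1}‖ + M_A ‖Δz_t^{(ℓ-1)}‖`. Unrolled from `Δu_0 = 0`, this bounds `‖Δu_t‖` by
the causal convolution of the input gaps with the kernel `γ^k`, and the discrete Young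
inequality turns it into an `ℓ²`-in-time bound with factor `S_T(γ)`. The spike map costs a
further `B₁`, so each layer multiplies the `ℓ²` gap by `B₁ M_A S_T(γ)`. Finally the readout
averages over `T` steps, and Cauchy–Schwarz (`ℓ¹ ≤ √T ℓ²`) leaves the factor `1/√T`.
-/

open Finset

def causalConv (g a : ℕ → ℝ) (t : ℕ) : ℝ := ∑ k ∈ Icc 1 t, g (t - k) * a k

theorem causalConv_const_mul (g a : ℕ → ℝ) (c : ℝ) (t : ℕ) :
    causalConv g (fun k => c * a k) t = c * causalConv g a t := by
  simp only [causalConv, mul_sum]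
  exact sum_congr rfl fun k _ => by ring

theorem causalConv_pow_succ (γ : ℝ) (a : ℕ → ℝ) (t : ℕ) :
    causalConv (γ ^ ·) a (t + 1) = γ * causalConv (γ ^ ·) a t + a (t + 1) := by
  rw [causalConv, causalConv, sum_Icc_succ_top (by omega), Nat.sub_self, pow_zero, one_mul,
    mul_sum]
  congr 1
  refine sum_congr rfl fun k hk => ?_
  rw [Nat.sub_add_comm (mem_Icc.1 hk).2, pow_succ]
  ring

theorem le_causalConv_pow_of_le_mul_add {γ : ℝ} (hγ : 0 ≤ γ) {e a : ℕ → ℝ} {T : ℕ}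
    (h0 : e 0 ≤ 0) (hstep : ∀ t, 1 ≤ t → t ≤ T → e t ≤ γ * e (t - 1) + a t) :
    ∀ t ≤ T, e t ≤ causalConv (γ ^ ·) a t
  | 0, _ => by simpa [causalConv] using h0
  | t + 1, ht => by
    rw [causalConv_pow_succ]
    calc e (t + 1) ≤ γ * e t + a (t + 1) := hstep (t + 1) (by omega) ht
      _ ≤ γ * causalConv (γ ^ ·) a t + a (t + 1) := by
        gcongr; exact le_causalConv_pow_of_le_mul_add hγ h0 hstep t (by omega)

theorem sum_comp_le_sum_range {g : ℕ → ℝ} (hg : ∀ j, 0 ≤ g j) {s : Finset ℕ} {e : ℕ → ℕ}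
    {T : ℕ} (he : Set.InjOn e s) (hlt : ∀ k ∈ s, e k < T) :
    ∑ k ∈ s, g (e k) ≤ ∑ j ∈ range T, g j := by
  rw [← sum_image he]
  exact sum_le_sum_of_subset_of_nonneg (fun j hj => by
    obtain ⟨k, hk, rfl⟩ := mem_image.1 hj; exact mem_range.2 (hlt k hk)) fun j _ _ => hg j

/-- Discrete Young inequality `‖g * a‖₂ ≤ ‖g‖₁ ‖a‖₂` for a nonnegative causal kernel. -/
theorem sum_sq_causalConv_le {g : ℕ → ℝ} (hg : ∀ j, 0 ≤ g j) (a : ℕ → ℝ) (T : ℕ) :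
    ∑ t ∈ Icc 1 T, causalConv g a t ^ 2
      ≤ (∑ j ∈ range T, g j) ^ 2 * ∑ t ∈ Icc 1 T, a t ^ 2 := by
  set S := ∑ j ∈ range T, g j
  have hS : 0 ≤ S := sum_nonneg fun j _ => hg j
  have pointwise : ∀ t ∈ Icc 1 T,
      causalConv g a t ^ 2 ≤ S * ∑ k ∈ Icc 1 t, g (t - k) * a k ^ 2 := by
    intro t ht
    -- Cauchy–Schwarz with weights `g (t - k)`
    calc causalConv g a t ^ 2
        ≤ (∑ k ∈ Icc 1 t, g (t - k)) * ∑ k ∈ Icc 1 t, g (t - k) * a k ^ 2 :=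
          sum_sq_le_sum_mul_sum_of_sq_le_mul _ (fun k _ => hg _)
            (fun k _ => mul_nonneg (hg _) (sq_nonneg _)) fun k _ => le_of_eq (by ring)
      _ ≤ S * ∑ k ∈ Icc 1 t, g (t - k) * a k ^ 2 := by
          gcongr
          · exact sum_nonneg fun k _ => mul_nonneg (hg _) (sq_nonneg _)
          · refine sum_comp_le_sum_range hg (fun k hk l hl h => ?_) fun k hk => ?_ <;>
              simp only [coe_Icc, Set.mem_Icc, mem_Icc] at * <;> omega
  calc ∑ t ∈ Icc 1 T, causalConv g a t ^ 2
      ≤ ∑ t ∈ Icc 1 T, S * ∑ k ∈ Icc 1 t, g (t - k) * a k ^ 2 := sum_le_sum pointwise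
    _ = S * ∑ k ∈ Icc 1 T, (∑ t ∈ Icc k T, g (t - k)) * a k ^ 2 := by
        simp_rw [← mul_sum, sum_mul]
        congr 1
        exact sum_comm' fun t k => by simp only [mem_Icc]; omega
    _ ≤ S * ∑ k ∈ Icc 1 T, S * a k ^ 2 := by
        gcongr with k hk
        refine sum_comp_le_sum_range hg (fun t ht l hl h => ?_) fun t ht => ?_ <;>
          simp only [coe_Icc, Set.mem_Icc, mem_Icc] at * <;> omega
    _ = S ^ 2 * ∑ t ∈ Icc 1 T, a t ^ 2 := by rw [← mul_sum]; ring

theorem EuclideanSpace.norm_sub_le_of_coord {ι : Type*} [Fintype ι] (φ : ι → ℝ → ℝ) {K : ℝ}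
    (hK : 0 ≤ K) (hφ : ∀ i a b, |φ i a - φ i b| ≤ K * |a - b|) (v w : EuclideanSpace ℝ ι) :
    ‖(WithLp.equiv 2 (ι → ℝ)).symm (fun i => φ i (v i))
        - (WithLp.equiv 2 (ι → ℝ)).symm (fun i => φ i (w i))‖ ≤ K * ‖v - w‖ := by
  rw [EuclideanSpace.norm_eq, EuclideanSpace.norm_eq, ← Real.sqrt_sq hK,
    ← Real.sqrt_mul (sq_nonneg K), mul_sum]
  gcongr with i
  simp only [PiLp.sub_apply, WithLp.equiv_symm_apply, Real.norm_eq_abs, sq_abs, ← mul_pow]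
  exact sq_le_sq.2 (by rw [abs_mul, abs_of_nonneg hK]; exact hφ i (v i) (w i))

theorem abs_leak_reset_sub_le {α θ Mθ B₁ : ℝ} (hα : 0 ≤ α) (hθ : |θ| ≤ Mθ) {σ : ℝ → ℝ}
    (hσ : ∀ a b, |σ a - σ b| ≤ B₁ * |a - b|) (a b : ℝ) :
    |(α * a - θ * σ (a - θ)) - (α * b - θ * σ (b - θ))| ≤ (α + Mθ * B₁) * |a - b| := by
  have hreset : |θ * (σ (a - θ) - σ (b - θ))| ≤ Mθ * (B₁ * |a - b|) := by
    rw [abs_mul]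
    refine mul_le_mul hθ ?_ (abs_nonneg _) ((abs_nonneg _).trans hθ)
    simpa only [sub_sub_sub_cancel_right] using hσ (a - θ) (b - θ)
  calc |(α * a - θ * σ (a - θ)) - (α * b - θ * σ (b - θ))|
      = |α * (a - b) - θ * (σ (a - θ) - σ (b - θ))| := by ring_nf
    _ ≤ |α * (a - b)| + |θ * (σ (a - θ) - σ (b - θ))| := abs_sub _ _
    _ ≤ α * |a - b| + Mθ * (B₁ * |a - b|) := by
        rw [abs_mul, abs_of_nonneg hα]; exact add_le_add le_rfl hreset
    _ = (α + Mθ * B₁) * |a - b| := by ring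

theorem lif_layer_sum_sq_dist_le {ι κ : Type*} [Fintype ι] [Fintype κ] {T : ℕ}
    {α Mθ B₁ MA : ℝ} (hα : 0 ≤ α) (hMθ : 0 ≤ Mθ) (hB₁ : 0 ≤ B₁)
    {σ : ℝ → ℝ} (hσ : ∀ a b, |σ a - σ b| ≤ B₁ * |a - b|)
    {A : EuclideanSpace ℝ ι →L[ℝ] EuclideanSpace ℝ κ} (hA : ‖A‖ ≤ MA)
    {b θ : EuclideanSpace ℝ κ} (hθ : ∀ i, |θ i| ≤ Mθ)
    {x x' : ℕ → EuclideanSpace ℝ ι} {u u' z z' : ℕ → EuclideanSpace ℝ κ}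
    (hu0 : u 0 = 0) (hu0' : u' 0 = 0)
    (hu : ∀ t, 1 ≤ t → t ≤ T → u t = α • u (t - 1) + A (x t) + b
      - (WithLp.equiv 2 (κ → ℝ)).symm (fun i => θ i * σ (u (t - 1) i - θ i)))
    (hu' : ∀ t, 1 ≤ t → t ≤ T → u' t = α • u' (t - 1) + A (x' t) + b
      - (WithLp.equiv 2 (κ → ℝ)).symm (fun i => θ i * σ (u' (t - 1) i - θ i)))
    (hz : ∀ t, 1 ≤ t → t ≤ T → z t = (WithLp.equiv 2 (κ → ℝ)).symm (fun i => σ (u t i - θ i)))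
    (hz' : ∀ t, 1 ≤ t → t ≤ T →
      z' t = (WithLp.equiv 2 (κ → ℝ)).symm (fun i => σ (u' t i - θ i))) :
    ∑ t ∈ Icc 1 T, ‖z t - z' t‖ ^ 2
      ≤ (B₁ * MA * ∑ k ∈ range T, (α + Mθ * B₁) ^ k) ^ 2 * ∑ t ∈ Icc 1 T, ‖x t - x' t‖ ^ 2 := by
  set γ := α + Mθ * B₁
  have hγ : 0 ≤ γ := by positivity
  have hspike : ∀ t, 1 ≤ t → t ≤ T → ‖z t - z' t‖ ≤ B₁ * ‖u t - u' t‖ := by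
    intro t ht1 ht2
    rw [hz t ht1 ht2, hz' t ht1 ht2]
    exact EuclideanSpace.norm_sub_le_of_coord (fun i a => σ (a - θ i)) hB₁
      (fun i a b => by
        simpa only [sub_sub_sub_cancel_right] using hσ (a - θ i) (b - θ i)) _ _
  have hmembrane : ∀ t, 1 ≤ t → t ≤ T →
      ‖u t - u' t‖ ≤ γ * ‖u (t - 1) - u' (t - 1)‖ + MA * ‖x t - x' t‖ := by
    intro t ht1 ht2
    have hsplit : u t - u' t
        = ((WithLp.equiv 2 (κ → ℝ)).symm
              (fun i => α * u (t - 1) i - θ i * σ (u (t - 1) i - θ i))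
            - (WithLp.equiv 2 (κ → ℝ)).symm
              (fun i => α * u' (t - 1) i - θ i * σ (u' (t - 1) i - θ i)))
          + A (x t - x' t) := by
      rw [hu t ht1 ht2, hu' t ht1 ht2, map_sub]
      ext i
      simp only [PiLp.add_apply, PiLp.sub_apply, PiLp.smul_apply, WithLp.equiv_symm_apply,
        smul_eq_mul]
      ring
    rw [hsplit]
    exact (norm_add_le _ _).trans (add_le_add
      (EuclideanSpace.norm_sub_le_of_coord _ hγ
        (fun i => abs_leak_reset_sub_le hα (hθ i) hσ) _ _)
      (A.le_of_opNorm_le hA _))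
  have hunroll := le_causalConv_pow_of_le_mul_add hγ (by simp [hu0, hu0']) hmembrane
  calc ∑ t ∈ Icc 1 T, ‖z t - z' t‖ ^ 2
      ≤ ∑ t ∈ Icc 1 T, causalConv (γ ^ ·) (fun k => B₁ * (MA * ‖x k - x' k‖)) t ^ 2 := by
        gcongr with t ht
        obtain ⟨ht1, ht2⟩ := mem_Icc.1 ht
        rw [causalConv_const_mul]
        exact (hspike t ht1 ht2).trans (mul_le_mul_of_nonneg_left (hunroll t ht2) hB₁)
    _ ≤ (∑ k ∈ range T, γ ^ k) ^ 2 * ∑ t ∈ Icc 1 T, (B₁ * (MA * ‖x t - x' t‖)) ^ 2 :=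
        sum_sq_causalConv_le (fun k => pow_nonneg hγ k) _ T
    _ = (B₁ * MA * ∑ k ∈ range T, γ ^ k) ^ 2 * ∑ t ∈ Icc 1 T, ‖x t - x' t‖ ^ 2 := by
        simp_rw [mul_pow, ← mul_sum]; ring

theorem norm_apply_average_le {E F : Type*} [NormedAddCommGroup E] [NormedSpace ℝ E]
    [NormedAddCommGroup F] [NormedSpace ℝ F] (W : E →L[ℝ] F) (T : ℕ) (w : ℕ → E) :
    ‖W ((T : ℝ)⁻¹ • ∑ t ∈ Icc 1 T, w t)‖
      ≤ ‖W‖ / Real.sqrt T * Real.sqrt (∑ t ∈ Icc 1 T, ‖w t‖ ^ 2) := by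
  have hcs : ∑ t ∈ Icc 1 T, ‖w t‖ ≤ Real.sqrt T * Real.sqrt (∑ t ∈ Icc 1 T, ‖w t‖ ^ 2) := by
    rw [← Real.sqrt_mul (Nat.cast_nonneg T), Real.le_sqrt (by positivity) (by positivity)]
    simpa using sq_sum_le_card_mul_sum_sq (s := Icc 1 T) (f := fun t => ‖w t‖)
  calc ‖W ((T : ℝ)⁻¹ • ∑ t ∈ Icc 1 T, w t)‖
      ≤ ‖W‖ * ((T : ℝ)⁻¹ * ∑ t ∈ Icc 1 T, ‖w t‖) := by
        refine (W.le_opNorm _).trans (mul_le_mul_of_nonneg_left ?_ (norm_nonneg W))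
        rw [norm_smul, norm_inv, Real.norm_natCast]
        exact mul_le_mul_of_nonneg_left (norm_sum_le _ _) (by positivity)
    _ ≤ ‖W‖ * ((T : ℝ)⁻¹ * (Real.sqrt T * Real.sqrt (∑ t ∈ Icc 1 T, ‖w t‖ ^ 2))) := by
        gcongr
    _ = ‖W‖ / Real.sqrt T * Real.sqrt (∑ t ∈ Icc 1 T, ‖w t‖ ^ 2) := by
        rw [← mul_assoc (T : ℝ)⁻¹, inv_mul_eq_div, Real.sqrt_div_self']
        ring

theorem surrogate_snn_input_lipschitz_general
    (L T C : ℕ) (hL : 1 ≤ L)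
    (d : ℕ → ℕ) (hd : ∀ ℓ, 1 ≤ d ℓ)
    (α MA Mθ B₁ Mout : ℝ) (hα0 : 0 < α)
    (A : ∀ ℓ : ℕ, EuclideanSpace ℝ (Fin (d (ℓ - 1))) →L[ℝ] EuclideanSpace ℝ (Fin (d ℓ)))
    (hA : ∀ ℓ, 1 ≤ ℓ → ℓ ≤ L → ‖A ℓ‖ ≤ MA)
    (b θ : ∀ ℓ : ℕ, EuclideanSpace ℝ (Fin (d ℓ)))
    (hθ : ∀ ℓ, 1 ≤ ℓ → ℓ ≤ L → ∀ i, |θ ℓ i| ≤ Mθ)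
    (σ : ℝ → ℝ) (hσ : Differentiable ℝ σ) (hB₁ : ∀ s, |deriv σ s| ≤ B₁)
    (Wout : EuclideanSpace ℝ (Fin (d L)) →L[ℝ] EuclideanSpace ℝ (Fin C))
    (hW : ‖Wout‖ ≤ Mout) (bout : EuclideanSpace ℝ (Fin C))
    (x x' : ℕ → EuclideanSpace ℝ (Fin (d 0)))
    (u u' z z' : ∀ ℓ : ℕ, ℕ → EuclideanSpace ℝ (Fin (d ℓ)))
    (hz0 : ∀ t, 1 ≤ t → t ≤ T → z 0 t = x t)
    (hz0' : ∀ t, 1 ≤ t → t ≤ T → z' 0 t = x' t)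
    (hu0 : ∀ ℓ, 1 ≤ ℓ → ℓ ≤ L → u ℓ 0 = 0)
    (hu0' : ∀ ℓ, 1 ≤ ℓ → ℓ ≤ L → u' ℓ 0 = 0)
    (hu : ∀ ℓ, 1 ≤ ℓ → ℓ ≤ L → ∀ t, 1 ≤ t → t ≤ T →
      u ℓ t = α • u ℓ (t - 1) + A ℓ (z (ℓ - 1) t) + b ℓ
        - (WithLp.equiv 2 (Fin (d ℓ) → ℝ)).symm
            (fun i => θ ℓ i * σ (u ℓ (t - 1) i - θ ℓ i)))
    (hu' : ∀ ℓ, 1 ≤ ℓ → ℓ ≤ L → ∀ t, 1 ≤ t → t ≤ T →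
      u' ℓ t = α • u' ℓ (t - 1) + A ℓ (z' (ℓ - 1) t) + b ℓ
        - (WithLp.equiv 2 (Fin (d ℓ) → ℝ)).symm
            (fun i => θ ℓ i * σ (u' ℓ (t - 1) i - θ ℓ i)))
    (hz : ∀ ℓ, 1 ≤ ℓ → ℓ ≤ L → ∀ t, 1 ≤ t → t ≤ T →
      z ℓ t = (WithLp.equiv 2 (Fin (d ℓ) → ℝ)).symm (fun i => σ (u ℓ t i - θ ℓ i)))
    (hz' : ∀ ℓ, 1 ≤ ℓ → ℓ ≤ L → ∀ t, 1 ≤ t → t ≤ T →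
      z' ℓ t = (WithLp.equiv 2 (Fin (d ℓ) → ℝ)).symm (fun i => σ (u' ℓ t i - θ ℓ i))) :
    ‖(Wout (((T : ℝ)⁻¹) • ∑ t ∈ Finset.Icc 1 T, z L t) + bout)
        - (Wout (((T : ℝ)⁻¹) • ∑ t ∈ Finset.Icc 1 T, z' L t) + bout)‖
      ≤ Mout * (B₁ * MA * ∑ k ∈ Finset.range T, (α + Mθ * B₁) ^ k) ^ L
          / Real.sqrt T
        * Real.sqrt (∑ t ∈ Finset.Icc 1 T, ‖x t - x' t‖ ^ 2) := by
  have hσ_lip : ∀ a b, |σ a - σ b| ≤ B₁ * |a - b| := fun a b => by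
    simpa only [Real.norm_eq_abs] using convex_univ.norm_image_sub_le_of_norm_deriv_le
      (fun s _ => hσ s) (fun s _ => (Real.norm_eq_abs _).trans_le (hB₁ s))
      (Set.mem_univ b) (Set.mem_univ a)
  have hB0 : 0 ≤ B₁ := (abs_nonneg _).trans (hB₁ 0)
  have hMA0 : 0 ≤ MA := (norm_nonneg _).trans (hA 1 le_rfl hL)
  have hMθ0 : 0 ≤ Mθ := (abs_nonneg _).trans (hθ 1 le_rfl hL ⟨0, hd 1⟩)
  have hMout0 : 0 ≤ Mout := (norm_nonneg _).trans hW
  set K := B₁ * MA * ∑ k ∈ Finset.range T, (α + Mθ * B₁) ^ k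
  have hK : 0 ≤ K := by positivity
  have hlayers : ∑ t ∈ Icc 1 T, ‖z L t - z' L t‖ ^ 2
      ≤ (K ^ 2) ^ L * ∑ t ∈ Icc 1 T, ‖z 0 t - z' 0 t‖ ^ 2 :=
    le_geom (u := fun ℓ => ∑ t ∈ Icc 1 T, ‖z ℓ t - z' ℓ t‖ ^ 2) (sq_nonneg K) L fun m hm =>
      have h1 : 1 ≤ m + 1 := by omega
      have h2 : m + 1 ≤ L := by omega
      lif_layer_sum_sq_dist_le hα0.le hMθ0 hB0 hσ_lip (hA _ h1 h2) (hθ _ h1 h2)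
        (hu0 _ h1 h2) (hu0' _ h1 h2) (hu _ h1 h2) (hu' _ h1 h2) (hz _ h1 h2) (hz' _ h1 h2)
  have hinput : ∑ t ∈ Icc 1 T, ‖z 0 t - z' 0 t‖ ^ 2 = ∑ t ∈ Icc 1 T, ‖x t - x' t‖ ^ 2 :=
    sum_congr rfl fun t ht => by
      obtain ⟨ht1, ht2⟩ := mem_Icc.1 ht
      rw [hz0 t ht1 ht2, hz0' t ht1 ht2]
  rw [add_sub_add_right_eq_sub, ← map_sub, ← smul_sub, ← sum_sub_distrib]
  calc _ ≤ ‖Wout‖ / Real.sqrt T * Real.sqrt (∑ t ∈ Icc 1 T, ‖z L t - z' L t‖ ^ 2) :=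
        norm_apply_average_le Wout T _
    _ ≤ Mout / Real.sqrt T * Real.sqrt ((K ^ 2) ^ L * ∑ t ∈ Icc 1 T, ‖x t - x' t‖ ^ 2) := by
        rw [← hinput]
        gcongr
    _ = Mout * K ^ L / Real.sqrt T * Real.sqrt (∑ t ∈ Icc 1 T, ‖x t - x' t‖ ^ 2) := by
        rw [Real.sqrt_mul (by positivity), ← pow_mul, mul_comm 2, pow_mul,
          Real.sqrt_sq (by positivity)]
        ring

/-- An `L`-layer surrogate-forward LIF network with leak
`α ∈ (0,1)`, layer maps `‖A^{(ℓ)}‖ ≤ M_A`, thresholds `‖θ^{(ℓ)}‖_∞ ≤ M_θ`,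
`B₁`-bounded surrogate derivative, contraction `γ = α + M_θ B₁ < 1`, and
time-averaged linear readout `‖W_out‖ ≤ M_out`, is input-Lipschitz with
constant `L_x = M_out (B₁ M_A S_T(γ))^L / √T` in the sequence norm
`‖x_{1:T}‖_{2,2}`, where `S_T(γ) = ∑_{k=0}^{T-1} γ^k`. -/
theorem surrogate_snn_input_lipschitz
    (L T C : ℕ) (hL : 1 ≤ L) (hT : 1 ≤ T) (hC : 1 ≤ C)
    (d : ℕ → ℕ) (hd : ∀ ℓ, 1 ≤ d ℓ)
    (α MA Mθ B₁ Mout : ℝ) (hα0 : 0 < α) (hα1 : α < 1)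
    (A : ∀ ℓ : ℕ, EuclideanSpace ℝ (Fin (d (ℓ - 1))) →L[ℝ] EuclideanSpace ℝ (Fin (d ℓ)))
    (hA : ∀ ℓ, 1 ≤ ℓ → ℓ ≤ L → ‖A ℓ‖ ≤ MA)
    (b θ : ∀ ℓ : ℕ, EuclideanSpace ℝ (Fin (d ℓ)))
    (hθ : ∀ ℓ, 1 ≤ ℓ → ℓ ≤ L → ∀ i, |θ ℓ i| ≤ Mθ)
    (σ : ℝ → ℝ) (hσ : Differentiable ℝ σ) (hB₁ : ∀ s, |deriv σ s| ≤ B₁)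
    (hγ : α + Mθ * B₁ < 1)
    (Wout : EuclideanSpace ℝ (Fin (d L)) →L[ℝ] EuclideanSpace ℝ (Fin C))
    (hW : ‖Wout‖ ≤ Mout) (bout : EuclideanSpace ℝ (Fin C))
    (x x' : ℕ → EuclideanSpace ℝ (Fin (d 0)))
    (u u' z z' : ∀ ℓ : ℕ, ℕ → EuclideanSpace ℝ (Fin (d ℓ)))
    (hz0 : ∀ t, 1 ≤ t → t ≤ T → z 0 t = x t)
    (hz0' : ∀ t, 1 ≤ t → t ≤ T → z' 0 t = x' t)
    (hu0 : ∀ ℓ, 1 ≤ ℓ → ℓ ≤ L → u ℓ 0 = 0)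
    (hu0' : ∀ ℓ, 1 ≤ ℓ → ℓ ≤ L → u' ℓ 0 = 0)
    (hu : ∀ ℓ, 1 ≤ ℓ → ℓ ≤ L → ∀ t, 1 ≤ t → t ≤ T →
      u ℓ t = α • u ℓ (t - 1) + A ℓ (z (ℓ - 1) t) + b ℓ
        - (WithLp.equiv 2 (Fin (d ℓ) → ℝ)).symm
            (fun i => θ ℓ i * σ (u ℓ (t - 1) i - θ ℓ i)))
    (hu' : ∀ ℓ, 1 ≤ ℓ → ℓ ≤ L → ∀ t, 1 ≤ t → t ≤ T →
      u' ℓ t = α • u' ℓ (t - 1) + A ℓ (z' (ℓ - 1) t) + b ℓ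
        - (WithLp.equiv 2 (Fin (d ℓ) → ℝ)).symm
            (fun i => θ ℓ i * σ (u' ℓ (t - 1) i - θ ℓ i)))
    (hz : ∀ ℓ, 1 ≤ ℓ → ℓ ≤ L → ∀ t, 1 ≤ t → t ≤ T →
      z ℓ t = (WithLp.equiv 2 (Fin (d ℓ) → ℝ)).symm (fun i => σ (u ℓ t i - θ ℓ i)))
    (hz' : ∀ ℓ, 1 ≤ ℓ → ℓ ≤ L → ∀ t, 1 ≤ t → t ≤ T →
      z' ℓ t = (WithLp.equiv 2 (Fin (d ℓ) → ℝ)).symm (fun i => σ (u' ℓ t i - θ ℓ i))) :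
    ‖(Wout (((T : ℝ)⁻¹) • ∑ t ∈ Finset.Icc 1 T, z L t) + bout)
        - (Wout (((T : ℝ)⁻¹) • ∑ t ∈ Finset.Icc 1 T, z' L t) + bout)‖
      ≤ Mout * (B₁ * MA * ∑ k ∈ Finset.range T, (α + Mθ * B₁) ^ k) ^ L
          / Real.sqrt T
        * Real.sqrt (∑ t ∈ Finset.Icc 1 T, ‖x t - x' t‖ ^ 2) :=
  surrogate_snn_input_lipschitz_general L T C hL d hd α MA Mθ B₁ Mout hα0 A hA b θ hθ σ hσ hB₁ Wout
    hW bout x x' u u' z z' hz0 hz0' hu0 hu0' hu hu' hz hz'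
end

section
/- Let L : ℝ^p → ℝ be differentiable with β-Lipschitz gradient (β > 0) and bounded below by L*. On a probability space, let (w_k)_{k≥0} and (ε_k)_{k≥0} be random vectors in ℝ^p and (g_k)_{k≥0} random vectors in ℝ^p such that: ‖ε_k‖₂ ≤ ρ almost surely; conditionally on (w_k, ε_k), g_k is an unbiased estimator of ∇L(w_k + ε_k), i.e. E[g_k | w_k, ε_k] = ∇L(w_k + ε_k); the conditional variance satisfies E[‖g_k - ∇L(w_k + ε_k)‖₂² | w_k, ε_k] ≤ σ²; and w_{k+1} = w_k - η g_k with 0 < η ≤ 1/(4β), while w_0 is deterministic. Then for every K ≥ 1, (1/K) ∑_{k=0}^{K-1} E[‖∇L(w_k)‖₂²] ≤ 4 (L(w_0) - L*)/(η K) + 3 β² ρ² + 2 η β σ². -/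
/-
By the descent lemma for the `β`-smooth `L`,
`E L(w_{k+1}) ≤ E L(w_k) - η E⟪∇L(w_k), g_k⟫ + (β η² / 2) E‖g_k‖²`.
As `∇L(w_k)` is `σ(w_k, ε_k)`-measurable, unbiasedness replaces `g_k` by `∇L(w_k + ε_k)` in the
cross term, and `‖∇L(w_k + ε_k) - ∇L(w_k)‖ ≤ β ρ` bounds it below by
`E‖∇L(w_k)‖² / 2 - β²ρ² / 2`. The second moment splits into the variance plus
`E‖∇L(w_k + ε_k)‖² ≤ 2 E‖∇L(w_k)‖² + 2 β²ρ²`. With `β η ≤ 1/4` this gives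
`E L(w_{k+1}) ≤ E L(w_k) - (η / 4) E‖∇L(w_k)‖² + (3η/4) β²ρ² + (β η² / 2) σ²`,
which telescopes against `L ≥ L*`. All iterates are square integrable by induction along the
recursion, so every expectation above is finite.
-/

open MeasureTheory
open scoped RealInnerProductSpace

section LipschitzGradient

variable {E : Type*} [NormedAddCommGroup E] [InnerProductSpace ℝ E] [CompleteSpace E]
  {L : E → ℝ} {β : ℝ}

theorem lipschitzWith_gradient
    (hsmooth : ∀ v v', ‖gradient L v - gradient L v'‖ ≤ β * ‖v - v'‖) :
    LipschitzWith β.toNNReal (gradient L) :=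
  LipschitzWith.of_dist_le' fun v v' => by simpa only [dist_eq_norm] using hsmooth v v'

theorem apply_le_of_lipschitz_gradient (hdiff : Differentiable ℝ L)
    (hsmooth : ∀ v v', ‖gradient L v - gradient L v'‖ ≤ β * ‖v - v'‖) (x y : E) :
    L y ≤ L x + ⟪gradient L x, y - x⟫ + β / 2 * ‖y - x‖ ^ 2 := by
  set v := y - x
  set φ : ℝ → ℝ := fun t => L (x + t • v) - t * ⟪gradient L x, v⟫ - β / 2 * ‖v‖ ^ 2 * t ^ 2
  have hφ : ∀ t, HasDerivAt φ
      (⟪gradient L (x + t • v) - gradient L x, v⟫ - β * ‖v‖ ^ 2 * t) t := by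
    intro t
    have hline : HasDerivAt (fun t : ℝ => x + t • v) v t := by
      simpa using ((hasDerivAt_id t).smul_const v).const_add x
    have hL := (hdiff (x + t • v)).hasGradientAt.hasFDerivAt.comp_hasDerivAt t hline
    rw [InnerProductSpace.toDual_apply_apply] at hL
    refine ((hL.sub ((hasDerivAt_id t).mul_const ⟪gradient L x, v⟫)).sub
      ((hasDerivAt_pow 2 t).const_mul (β / 2 * ‖v‖ ^ 2))).congr_deriv ?_
    rw [inner_sub_left]
    simp only [Nat.cast_ofNat]
    ring
  have hanti : AntitoneOn φ (Set.Icc 0 1) := by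
    have hdφ : Differentiable ℝ φ := fun t => (hφ t).differentiableAt
    refine antitoneOn_of_deriv_nonpos (convex_Icc 0 1) hdφ.continuous.continuousOn
      hdφ.differentiableOn fun t ht => ?_
    rw [interior_Icc] at ht
    rw [(hφ t).deriv, sub_nonpos]
    calc ⟪gradient L (x + t • v) - gradient L x, v⟫
        ≤ ‖gradient L (x + t • v) - gradient L x‖ * ‖v‖ := real_inner_le_norm _ _
      _ ≤ β * ‖t • v‖ * ‖v‖ := by
          gcongr
          simpa using hsmooth (x + t • v) x
      _ = β * ‖v‖ ^ 2 * t := by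
          rw [norm_smul, Real.norm_of_nonneg ht.1.le]
          ring
  have h01 := hanti (by norm_num) (by norm_num) zero_le_one
  simp only [φ, v, one_smul, zero_smul, add_zero, add_sub_cancel] at h01
  linarith

theorem abs_apply_le_of_lipschitz_gradient (hβ : 0 ≤ β) (hdiff : Differentiable ℝ L)
    (hsmooth : ∀ v v', ‖gradient L v - gradient L v'‖ ≤ β * ‖v - v'‖)
    {Lstar : ℝ} (hbdd : ∀ v, Lstar ≤ L v) (v : E) :
    |L v| ≤ |Lstar| + |L 0| + ‖gradient L 0‖ * ‖v‖ + β / 2 * ‖v‖ ^ 2 := by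
  have hup := apply_le_of_lipschitz_gradient hdiff hsmooth 0 v
  rw [sub_zero] at hup
  have hinner := real_inner_le_norm (gradient L 0) v
  rw [abs_le]
  constructor <;> linarith [hbdd v, neg_abs_le Lstar, le_abs_self (L 0), abs_nonneg Lstar,
    abs_nonneg (L 0), mul_nonneg (norm_nonneg (gradient L 0)) (norm_nonneg v),
    mul_nonneg hβ (sq_nonneg ‖v‖)]

end LipschitzGradient

section SquareIntegrable

variable {Ω E : Type*} {mΩ : MeasurableSpace Ω} {μ : Measure Ω}
  [NormedAddCommGroup E] [InnerProductSpace ℝ E]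

theorem MeasureTheory.MemLp.integrable_inner {X Y : Ω → E} (hX : MemLp X 2 μ)
    (hY : MemLp Y 2 μ) : Integrable (fun ω => ⟪X ω, Y ω⟫) μ :=
  (L2.integrable_inner (𝕜 := ℝ) (hX.toLp X) (hY.toLp Y)).congr <| by
    filter_upwards [hX.coeFn_toLp, hY.coeFn_toLp] with ω hXω hYω
    rw [hXω, hYω]

theorem integral_inner_condExp [CompleteSpace E] {m : MeasurableSpace Ω} (hm : m ≤ mΩ)
    [SigmaFinite (μ.trim hm)] {X Y : Ω → E} (hX : StronglyMeasurable[m] X)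
    (hXY : Integrable (fun ω => ⟪X ω, Y ω⟫) μ) (hY : Integrable Y μ) :
    ∫ ω, ⟪X ω, (μ[Y | m]) ω⟫ ∂μ = ∫ ω, ⟪X ω, Y ω⟫ ∂μ := by
  refine Eq.trans (integral_congr_ae ?_) (integral_condExp hm)
  filter_upwards [condExp_bilin_of_stronglyMeasurable_left (innerSL ℝ) hX hXY hY] with ω hω
  exact hω.symm

theorem integral_norm_sq_eq_of_condExp_eq [CompleteSpace E] [IsFiniteMeasure μ]
    {m : MeasurableSpace Ω} (hm : m ≤ mΩ) [SigmaFinite (μ.trim hm)] {Y H : Ω → E}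
    (hY : MemLp Y 2 μ) (hH : MemLp H 2 μ) (hHm : StronglyMeasurable[m] H)
    (hcond : μ[Y | m] =ᵐ[μ] H) :
    ∫ ω, ‖Y ω‖ ^ 2 ∂μ = ∫ ω, ‖Y ω - H ω‖ ^ 2 ∂μ + ∫ ω, ‖H ω‖ ^ 2 ∂μ := by
  have hHY : ∫ ω, ⟪H ω, Y ω⟫ ∂μ = ∫ ω, ‖H ω‖ ^ 2 ∂μ := by
    rw [← integral_inner_condExp hm hHm (hH.integrable_inner hY) (hY.integrable one_le_two)]
    refine integral_congr_ae ?_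
    filter_upwards [hcond] with ω hω
    rw [hω, real_inner_self_eq_norm_sq]
  have hexpand : ∀ ω, ‖Y ω‖ ^ 2 = ‖Y ω - H ω‖ ^ 2 + 2 * ⟪H ω, Y ω⟫ - ‖H ω‖ ^ 2 := fun ω => by
    rw [norm_sub_sq_real, real_inner_comm]
    ring
  have hYH : Integrable (fun ω => ‖Y ω - H ω‖ ^ 2) μ :=
    (hY.sub hH).integrable_norm_pow two_ne_zero
  have hHY2 := (hH.integrable_inner hY).const_mul 2
  simp_rw [hexpand]
  rw [integral_sub (by exact hYH.add hHY2) (hH.integrable_norm_pow two_ne_zero),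
    integral_add hYH hHY2, integral_const_mul, hHY]
  ring

theorem integral_le_of_condExp_le [IsProbabilityMeasure μ] {m : MeasurableSpace Ω}
    (hm : m ≤ mΩ) {f : Ω → ℝ} {c : ℝ} (hf : ∀ᵐ ω ∂μ, (μ[f | m]) ω ≤ c) :
    ∫ ω, f ω ∂μ ≤ c := by
  rw [← integral_condExp hm]
  simpa using integral_mono_ae integrable_condExp (integrable_const c) hf

end SquareIntegrable

theorem LipschitzWith.memLp_comp {Ω E F : Type*} {mΩ : MeasurableSpace Ω} {μ : Measure Ω}
    [IsFiniteMeasure μ] [NormedAddCommGroup E] [NormedAddCommGroup F] {f : E → F} {K : NNReal}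
    (hf : LipschitzWith K f) {X : Ω → E} {p : ENNReal} (hX : MemLp X p μ) :
    MemLp (fun ω => f (X ω)) p μ := by
  have hsub : MemLp (fun ω => f (X ω) - f 0) p μ :=
    hX.of_le_mul ((hf.continuous.comp_aestronglyMeasurable hX.1).sub aestronglyMeasurable_const)
      (ae_of_all _ fun ω => by simpa [dist_eq_norm] using hf.dist_le_mul (X ω) 0)
  refine (hsub.add (memLp_const (f 0))).ae_eq (ae_of_all _ fun ω => ?_)
  simp

theorem MeasureTheory.MemLp.of_integrable_norm_sub_sq {Ω E : Type*} {mΩ : MeasurableSpace Ω}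
    {μ : Measure Ω} [NormedAddCommGroup E] {Y H : Ω → E} (hH : MemLp H 2 μ)
    (hY : AEStronglyMeasurable Y μ) (h : Integrable (fun ω => ‖Y ω - H ω‖ ^ 2) μ) :
    MemLp Y 2 μ := by
  simpa using ((memLp_two_iff_integrable_sq_norm (hY.sub hH.1)).2 h).add hH

section Perturbation

variable {Ω E : Type*} {mΩ : MeasurableSpace Ω} {μ : Measure Ω} [IsProbabilityMeasure μ]
  [NormedAddCommGroup E] {A B : Ω → E} {δ : ℝ}

theorem integral_norm_sq_le_of_norm_sub_le (hA : MemLp A 2 μ) (hB : MemLp B 2 μ)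
    (hAB : ∀ᵐ ω ∂μ, ‖B ω - A ω‖ ≤ δ) :
    ∫ ω, ‖B ω‖ ^ 2 ∂μ ≤ 2 * ∫ ω, ‖A ω‖ ^ 2 ∂μ + 2 * δ ^ 2 := by
  have hA2 := hA.integrable_norm_pow two_ne_zero
  have hmono : ∫ ω, ‖B ω‖ ^ 2 ∂μ ≤ ∫ ω, (2 * ‖A ω‖ ^ 2 + 2 * δ ^ 2) ∂μ := by
    refine integral_mono_ae (hB.integrable_norm_pow two_ne_zero)
      ((hA2.const_mul 2).add (integrable_const _)) ?_
    filter_upwards [hAB] with ω hω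
    calc ‖B ω‖ ^ 2 ≤ (‖A ω‖ + δ) ^ 2 := by
          gcongr
          exact (norm_le_norm_add_norm_sub' _ _).trans (by gcongr)
      _ ≤ 2 * ‖A ω‖ ^ 2 + 2 * δ ^ 2 := by linarith [add_sq_le (a := ‖A ω‖) (b := δ)]
  rwa [integral_add (hA2.const_mul 2) (integrable_const _), integral_const_mul, integral_const,
    probReal_univ, one_smul] at hmono

variable [InnerProductSpace ℝ E]

theorem integral_norm_sq_sub_sq_le_two_mul_integral_inner (hA : MemLp A 2 μ)
    (hB : MemLp B 2 μ) (hAB : ∀ᵐ ω ∂μ, ‖B ω - A ω‖ ≤ δ) :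
    ∫ ω, ‖A ω‖ ^ 2 ∂μ - δ ^ 2 ≤ 2 * ∫ ω, ⟪A ω, B ω⟫ ∂μ := by
  have hA2 := hA.integrable_norm_pow two_ne_zero
  have hmono : ∫ ω, (‖A ω‖ ^ 2 - δ ^ 2) ∂μ ≤ ∫ ω, 2 * ⟪A ω, B ω⟫ ∂μ := by
    refine integral_mono_ae (hA2.sub (integrable_const _))
      ((hA.integrable_inner hB).const_mul 2) ?_
    filter_upwards [hAB] with ω hω
    have hsq := pow_le_pow_left₀ (norm_nonneg _) hω 2
    rw [norm_sub_sq_real, real_inner_comm] at hsq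
    linarith [sq_nonneg ‖B ω‖]
  rwa [integral_sub hA2 (integrable_const _), integral_const_mul, integral_const,
    probReal_univ, one_smul] at hmono

end Perturbation

section SmoothComposition

variable {Ω E : Type*} {mΩ : MeasurableSpace Ω} {μ : Measure Ω} [IsFiniteMeasure μ]
  [NormedAddCommGroup E] [InnerProductSpace ℝ E] [CompleteSpace E]
  {L : E → ℝ} {β Lstar : ℝ}

theorem integrable_comp_of_lipschitz_gradient (hβ : 0 ≤ β) (hdiff : Differentiable ℝ L)
    (hsmooth : ∀ v v', ‖gradient L v - gradient L v'‖ ≤ β * ‖v - v'‖)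
    (hbdd : ∀ v, Lstar ≤ L v) {X : Ω → E} (hX : MemLp X 2 μ) :
    Integrable (fun ω => L (X ω)) μ := by
  refine Integrable.mono' ?_ (hdiff.continuous.comp_aestronglyMeasurable hX.1)
    (ae_of_all _ fun ω => (Real.norm_eq_abs _).trans_le
      (abs_apply_le_of_lipschitz_gradient hβ hdiff hsmooth hbdd (X ω)))
  exact ((integrable_const _).add ((hX.integrable one_le_two).norm.const_mul _)).add
    ((hX.integrable_norm_pow two_ne_zero).const_mul _)

theorem integral_comp_sub_smul_le (hβ : 0 ≤ β) (hdiff : Differentiable ℝ L)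
    (hsmooth : ∀ v v', ‖gradient L v - gradient L v'‖ ≤ β * ‖v - v'‖)
    (hbdd : ∀ v, Lstar ≤ L v) {X g : Ω → E} (hX : MemLp X 2 μ) (hg : MemLp g 2 μ) (η : ℝ) :
    ∫ ω, L (X ω - η • g ω) ∂μ ≤ ∫ ω, L (X ω) ∂μ - η * ∫ ω, ⟪gradient L (X ω), g ω⟫ ∂μ
      + β * η ^ 2 / 2 * ∫ ω, ‖g ω‖ ^ 2 ∂μ := by
  have hLX := integrable_comp_of_lipschitz_gradient hβ hdiff hsmooth hbdd hX
  have hinner := ((lipschitzWith_gradient hsmooth).memLp_comp hX).integrable_inner hg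
  have hg2 := hg.integrable_norm_pow two_ne_zero
  have hpointwise : ∀ ω, L (X ω - η • g ω)
      ≤ L (X ω) - η * ⟪gradient L (X ω), g ω⟫ + β * η ^ 2 / 2 * ‖g ω‖ ^ 2 := fun ω => by
    have h := apply_le_of_lipschitz_gradient hdiff hsmooth (X ω) (X ω - η • g ω)
    rw [sub_sub_cancel_left, inner_neg_right, real_inner_smul_right, norm_neg, norm_smul,
      mul_pow, Real.norm_eq_abs, sq_abs] at h
    linarith
  calc ∫ ω, L (X ω - η • g ω) ∂μ
      ≤ ∫ ω, (L (X ω) - η * ⟪gradient L (X ω), g ω⟫ + β * η ^ 2 / 2 * ‖g ω‖ ^ 2) ∂μ :=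
        integral_mono (integrable_comp_of_lipschitz_gradient hβ hdiff hsmooth hbdd
          (hX.sub (hg.const_smul η))) ((hLX.sub (hinner.const_mul η)).add (hg2.const_mul _))
          hpointwise
    _ = _ := by
        rw [integral_add (by exact hLX.sub (hinner.const_mul η)) (hg2.const_mul _),
          integral_sub hLX (hinner.const_mul η), integral_const_mul, integral_const_mul]

theorem memLp_gradient_comp_add
    (hsmooth : ∀ v v', ‖gradient L v - gradient L v'‖ ≤ β * ‖v - v'‖) {X ε : Ω → E} {ρ : ℝ}
    (hX : MemLp X 2 μ) (hε : AEStronglyMeasurable ε μ) (hε_bdd : ∀ᵐ ω ∂μ, ‖ε ω‖ ≤ ρ) :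
    MemLp (fun ω => gradient L (X ω + ε ω)) 2 μ :=
  (lipschitzWith_gradient hsmooth).memLp_comp (hX.add (MemLp.of_bound hε ρ hε_bdd))

end SmoothComposition

section StochasticStep

variable {Ω E : Type*} {mΩ : MeasurableSpace Ω} {μ : Measure Ω} [IsProbabilityMeasure μ]
  [NormedAddCommGroup E] [InnerProductSpace ℝ E] [CompleteSpace E]
  [MeasurableSpace E] [BorelSpace E] [SecondCountableTopology E]
  {L : E → ℝ} {β ρ σ η Lstar : ℝ} {X ε g : Ω → E}

theorem integral_comp_sast_step_le (hβ : 0 ≤ β) (hdiff : Differentiable ℝ L)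
    (hsmooth : ∀ v v', ‖gradient L v - gradient L v'‖ ≤ β * ‖v - v'‖)
    (hbdd : ∀ v, Lstar ≤ L v) (hη : 0 ≤ η) (hβη : β * η ≤ 1 / 4)
    (hXm : Measurable X) (hεm : Measurable ε) (hX : MemLp X 2 μ) (hg : MemLp g 2 μ)
    (hε_bdd : ∀ᵐ ω ∂μ, ‖ε ω‖ ≤ ρ)
    (hunbiased : μ[g | MeasurableSpace.comap (fun ω => (X ω, ε ω)) inferInstance]
      =ᵐ[μ] fun ω => gradient L (X ω + ε ω))
    (hvar : ∀ᵐ ω ∂μ, (μ[(fun ω' => ‖g ω' - gradient L (X ω' + ε ω')‖ ^ 2)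
      | MeasurableSpace.comap (fun ω' => (X ω', ε ω')) inferInstance]) ω ≤ σ ^ 2) :
    ∫ ω, L (X ω - η • g ω) ∂μ ≤ ∫ ω, L (X ω) ∂μ
      - η / 4 * (∫ ω, ‖gradient L (X ω)‖ ^ 2 ∂μ - (3 * β ^ 2 * ρ ^ 2 + 2 * η * β * σ ^ 2)) := by
  set m := MeasurableSpace.comap (fun ω => (X ω, ε ω)) inferInstance
  have hm : m ≤ mΩ := (hXm.prodMk hεm).comap_le
  have hpair : Measurable[m] fun ω => (X ω, ε ω) := Measurable.of_comap_le le_rfl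
  have hGcont := (lipschitzWith_gradient hsmooth).continuous
  have hGXm : StronglyMeasurable[m] fun ω => gradient L (X ω) :=
    (hGcont.measurable.comp (measurable_fst.comp hpair)).stronglyMeasurable
  have hHm : StronglyMeasurable[m] fun ω => gradient L (X ω + ε ω) :=
    (hGcont.measurable.comp ((measurable_fst.add measurable_snd).comp hpair)).stronglyMeasurable
  have hGX := (lipschitzWith_gradient hsmooth).memLp_comp hX
  have hH := memLp_gradient_comp_add hsmooth hX hεm.aestronglyMeasurable hε_bdd
  have hclose : ∀ᵐ ω ∂μ, ‖gradient L (X ω + ε ω) - gradient L (X ω)‖ ≤ β * ρ := by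
    filter_upwards [hε_bdd] with ω hω
    calc _ ≤ β * ‖ε ω‖ := by simpa using hsmooth (X ω + ε ω) (X ω)
      _ ≤ β * ρ := by gcongr
  have hcross : ∫ ω, ⟪gradient L (X ω), g ω⟫ ∂μ
      = ∫ ω, ⟪gradient L (X ω), gradient L (X ω + ε ω)⟫ ∂μ := by
    rw [← integral_inner_condExp hm hGXm (hGX.integrable_inner hg) (hg.integrable one_le_two)]
    exact integral_congr_ae (hunbiased.mono fun ω hω => by simp only [hω])
  have hdescent := integral_comp_sub_smul_le hβ hdiff hsmooth hbdd hX hg η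
  have hinner := integral_norm_sq_sub_sq_le_two_mul_integral_inner hGX hH hclose
  have hsecond := integral_norm_sq_eq_of_condExp_eq hm hg hH hHm hunbiased
  have hnoise := integral_le_of_condExp_le hm hvar
  have hsignal := integral_norm_sq_le_of_norm_sub_le hGX hH hclose
  have hN : 0 ≤ ∫ ω, ‖gradient L (X ω)‖ ^ 2 ∂μ := integral_nonneg fun ω => sq_nonneg _
  have hstep : 0 ≤ η * (1 / 4 - β * η) := mul_nonneg hη (by linarith)
  rw [hcross] at hdescent
  -- `β η ≤ 1/4` turns `η/2 - β η²` into at least `η/4` and `η/2 + β η²` into at most `3η/4`.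
  nlinarith [mul_le_mul_of_nonneg_left hinner hη,
    mul_le_mul_of_nonneg_left (add_le_add hnoise hsignal)
      (by positivity : 0 ≤ β * η ^ 2 / 2),
    mul_nonneg hstep hN, mul_nonneg hstep (sq_nonneg (β * ρ))]

end StochasticStep

theorem average_le_of_descent {a b : ℕ → ℝ} {γ c aMin : ℝ} (hγ : 0 < γ)
    (h : ∀ k, a (k + 1) ≤ a k - γ * (b k - c)) (hmin : ∀ k, aMin ≤ a k) {K : ℕ} (hK : 0 < K) :
    1 / (K : ℝ) * ∑ k ∈ Finset.range K, b k ≤ (a 0 - aMin) / (γ * K) + c := by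
  have hsum := Finset.sum_le_sum fun k (_ : k ∈ Finset.range K) =>
    (by linarith [h k] : γ * (b k - c) ≤ a k - a (k + 1))
  rw [Finset.sum_range_sub', ← Finset.mul_sum, Finset.sum_sub_distrib, Finset.sum_const,
    Finset.card_range, nsmul_eq_mul] at hsum
  have hKpos : (0 : ℝ) < K := by exact_mod_cast hK
  rw [one_div_mul_eq_div, div_add' _ _ _ (by positivity), div_le_div_iff₀ hKpos (by positivity)]
  nlinarith [hmin K]

theorem sast_stochastic_convergence_general
    (p : ℕ)
    (L : EuclideanSpace ℝ (Fin p) → ℝ) (β ρ σ η Lstar : ℝ)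
    (hβ : 0 < β)
    (hdiff : Differentiable ℝ L)
    (hsmooth : ∀ v v', ‖gradient L v - gradient L v'‖ ≤ β * ‖v - v'‖)
    (hbdd : ∀ v, Lstar ≤ L v)
    (hη0 : 0 < η) (hη : η ≤ 1 / (4 * β))
    {Ω : Type} [MeasurableSpace Ω] (μ : Measure Ω) [IsProbabilityMeasure μ]
    (w ε g : ℕ → Ω → EuclideanSpace ℝ (Fin p))
    (hw_meas : ∀ k, Measurable (w k))
    (hε_meas : ∀ k, Measurable (ε k))
    (hg_int : ∀ k, Integrable (g k) μ)
    (hsq_int : ∀ k,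
      Integrable (fun ω => ‖g k ω - gradient L (w k ω + ε k ω)‖ ^ 2) μ)
    (w0 : EuclideanSpace ℝ (Fin p)) (hw0 : w 0 = fun _ => w0)
    (hε_bdd : ∀ k, ∀ᵐ ω ∂μ, ‖ε k ω‖ ≤ ρ)
    (hunbiased : ∀ k,
      μ[g k | MeasurableSpace.comap (fun ω => (w k ω, ε k ω)) inferInstance]
        =ᵐ[μ] fun ω => gradient L (w k ω + ε k ω))
    (hvar : ∀ k, ∀ᵐ ω ∂μ,
      (μ[(fun ω' => ‖g k ω' - gradient L (w k ω' + ε k ω')‖ ^ 2)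
        | MeasurableSpace.comap (fun ω' => (w k ω', ε k ω')) inferInstance]) ω
        ≤ σ ^ 2)
    (hupdate : ∀ k ω, w (k + 1) ω = w k ω - η • g k ω) :
    ∀ K : ℕ, 1 ≤ K →
      (1 / (K : ℝ)) * ∑ k ∈ Finset.range K,
          (∫ ω, ‖gradient L (w k ω)‖ ^ 2 ∂μ)
        ≤ 4 * (L w0 - Lstar) / (η * K) + 3 * β ^ 2 * ρ ^ 2
          + 2 * η * β * σ ^ 2 := by
  intro K hK
  have hβη : β * η ≤ 1 / 4 := by
    rw [le_div_iff₀ (by positivity)] at hη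
    linarith
  have hg2 : ∀ k, MemLp (w k) 2 μ → MemLp (g k) 2 μ := fun k hw =>
    (memLp_gradient_comp_add hsmooth hw (hε_meas k).aestronglyMeasurable
      (hε_bdd k)).of_integrable_norm_sub_sq (hg_int k).1 (hsq_int k)
  have hw2 : ∀ k, MemLp (w k) 2 μ := by
    intro k
    induction k with
    | zero => exact hw0 ▸ memLp_const w0
    | succ k ih => exact (funext (hupdate k)).symm ▸ ih.sub ((hg2 k ih).const_smul η)
  have hstep : ∀ k, ∫ ω, L (w (k + 1) ω) ∂μ ≤ ∫ ω, L (w k ω) ∂μ - η / 4 *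
      (∫ ω, ‖gradient L (w k ω)‖ ^ 2 ∂μ - (3 * β ^ 2 * ρ ^ 2 + 2 * η * β * σ ^ 2)) := fun k => by
    simpa only [hupdate] using integral_comp_sast_step_le hβ.le hdiff hsmooth hbdd hη0.le hβη
      (hw_meas k) (hε_meas k) (hw2 k) (hg2 k (hw2 k)) (hε_bdd k) (hunbiased k) (hvar k)
  have hmin : ∀ k, Lstar ≤ ∫ ω, L (w k ω) ∂μ := fun k => by
    simpa using integral_mono (integrable_const Lstar)
      (integrable_comp_of_lipschitz_gradient hβ.le hdiff hsmooth hbdd (hw2 k)) fun ω => hbdd _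
  calc _ ≤ (∫ ω, L (w 0 ω) ∂μ - Lstar) / (η / 4 * K) + (3 * β ^ 2 * ρ ^ 2 + 2 * η * β * σ ^ 2) :=
        average_le_of_descent (by positivity) hstep hmin hK
    _ = _ := by
        simp only [hw0, integral_const, probReal_univ, one_smul]
        field_simp
        ring

/-- Nonconvex convergence of stochastic SAST: `L` is
differentiable with `β`-Lipschitz gradient (`β > 0`) and bounded below by
`L*`; the perturbations satisfy `‖ε_k‖ ≤ ρ` a.s.; conditionally on
`(w_k, ε_k)` the stochastic gradient `g_k` is unbiased for `∇L(w_k + ε_k)`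
with conditional variance at most `σ²`; the iterates follow
`w_{k+1} = w_k - η g_k` with `0 < η ≤ 1/(4β)` from a deterministic `w_0`.
Then `(1/K) ∑_{k<K} E‖∇L(w_k)‖² ≤ 4(L(w_0)-L*)/(ηK) + 3β²ρ² + 2ηβσ²`. -/
theorem sast_stochastic_convergence
    (p : ℕ) (hp : 1 ≤ p)
    (L : EuclideanSpace ℝ (Fin p) → ℝ) (β ρ σ η Lstar : ℝ)
    (hβ : 0 < β) (hρ : 0 ≤ ρ) (hσ : 0 ≤ σ)
    (hdiff : Differentiable ℝ L)
    (hsmooth : ∀ v v', ‖gradient L v - gradient L v'‖ ≤ β * ‖v - v'‖)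
    (hbdd : ∀ v, Lstar ≤ L v)
    (hη0 : 0 < η) (hη : η ≤ 1 / (4 * β))
    {Ω : Type} [MeasurableSpace Ω] (μ : Measure Ω) [IsProbabilityMeasure μ]
    (w ε g : ℕ → Ω → EuclideanSpace ℝ (Fin p))
    (hw_meas : ∀ k, Measurable (w k))
    (hε_meas : ∀ k, Measurable (ε k))
    (hg_meas : ∀ k, Measurable (g k))
    (hg_int : ∀ k, Integrable (g k) μ)
    (hsq_int : ∀ k,
      Integrable (fun ω => ‖g k ω - gradient L (w k ω + ε k ω)‖ ^ 2) μ)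
    (w0 : EuclideanSpace ℝ (Fin p)) (hw0 : w 0 = fun _ => w0)
    (hε_bdd : ∀ k, ∀ᵐ ω ∂μ, ‖ε k ω‖ ≤ ρ)
    (hunbiased : ∀ k,
      μ[g k | MeasurableSpace.comap (fun ω => (w k ω, ε k ω)) inferInstance]
        =ᵐ[μ] fun ω => gradient L (w k ω + ε k ω))
    (hvar : ∀ k, ∀ᵐ ω ∂μ,
      (μ[(fun ω' => ‖g k ω' - gradient L (w k ω' + ε k ω')‖ ^ 2)
        | MeasurableSpace.comap (fun ω' => (w k ω', ε k ω')) inferInstance]) ω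
        ≤ σ ^ 2)
    (hupdate : ∀ k ω, w (k + 1) ω = w k ω - η • g k ω) :
    ∀ K : ℕ, 1 ≤ K →
      (1 / (K : ℝ)) * ∑ k ∈ Finset.range K,
          (∫ ω, ‖gradient L (w k ω)‖ ^ 2 ∂μ)
        ≤ 4 * (L w0 - Lstar) / (η * K) + 3 * β ^ 2 * ρ ^ 2
          + 2 * η * β * σ ^ 2 :=
  sast_stochastic_convergence_general p L β ρ σ η Lstar hβ hdiff hsmooth hbdd hη0 hη μ w ε g hw_meas
    hε_meas hg_int hsq_int w0 hw0 hε_bdd hunbiased hvar hupdate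
end
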